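/- arXiv:1906.03866 — 6 statements merged into one kernel-verified Lean document; each statement's English description precedes it below -/
import Mathlib

section
/- Suppose z_1 < z_2 < ... < z_n are distinct observed times with censoring indicators δ_1,...,δ_n ∈ {0,1}. Define the Kaplan–Meier survival estimate for the event distribution Ŝ(z_k) = ∏_{i=1}^k ((n-i)/(n-i+1))^{δ_i}, and the Kaplan–Meier weights w_k = Ŝ(z_{k-1}) − Ŝ(z_k) = ∏_{i=1}^{k-1} ((n-i)/(n-i+1))^{δ_i} · (1/(n-k+1))^{δ_k} for δ_k = 1. Define the Kaplan–Meier estimate of the censoring survival function P̂(C > z_k) = ∏_{i=1}^k ((n-i)/(n-i+1))^{1-δ_i}. Then for every k with δ_k = 1, w_k = (1/n) · 1/P̂(C > z_{k-1}), i.e. the Kaplan–Meier event weight equals 1/n times the inverse of the Kaplan–Meier estimate of the probability of being uncensored just before time z_k. -/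
open Finset

/-- Kaplan–Meier survival estimate of the event-time distribution based on a censored
sample of size `n` with distinct sorted times `z_1 < ... < z_n` and indicators `δ_i`. -/
noncomputable def kmSurvival (n : ℕ) (δ : ℕ → ℕ) (k : ℕ) : ℝ :=
  ∏ i ∈ Finset.Icc 1 k, (((n : ℝ) - i) / ((n : ℝ) - i + 1)) ^ δ i

/-- Kaplan–Meier estimate of the censoring survival function `P̂(C > z_k)`. -/
noncomputable def kmCensoring (n : ℕ) (δ : ℕ → ℕ) (k : ℕ) : ℝ :=
  ∏ i ∈ Finset.Icc 1 k, (((n : ℝ) - i) / ((n : ℝ) - i + 1)) ^ (1 - δ i)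

/-- Kaplan–Meier weight `w_k = Ŝ(z_{k-1}) − Ŝ(z_k)`. -/
noncomputable def kmWeight (n : ℕ) (δ : ℕ → ℕ) (k : ℕ) : ℝ :=
  kmSurvival n δ (k - 1) - kmSurvival n δ k

lemma km_prod_mul (n : ℕ) (δ : ℕ → ℕ) (hδ : ∀ i, δ i ≤ 1) (m : ℕ) :
    kmSurvival n δ m * kmCensoring n δ m
      = ∏ i ∈ Finset.Icc 1 m, (((n : ℝ) - i) / ((n : ℝ) - i + 1)) := by
  rw [kmSurvival, kmCensoring, ← Finset.prod_mul_distrib]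
  refine Finset.prod_congr rfl fun i _ => ?_
  rw [← pow_add]
  have h : δ i + (1 - δ i) = 1 := by have := hδ i; omega
  rw [h, pow_one]

lemma km_telescope (n : ℕ) (hn : 0 < n) :
    ∀ m, m ≤ n → ∏ i ∈ Finset.Icc 1 m, (((n : ℝ) - i) / ((n : ℝ) - i + 1)) = ((n : ℝ) - m) / n := by
  intro m
  induction m with
  | zero =>
    intro _
    simp [div_self (show (n:ℝ) ≠ 0 by positivity)]
  | succ m ih =>
    intro h
    rw [Finset.prod_Icc_succ_top (Nat.le_add_left 1 m), ih (Nat.le_of_succ_le h)]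
    have hm : (m : ℝ) < n := by exact_mod_cast h
    have h1 : (n : ℝ) - m ≠ 0 := by linarith
    have h2 : (n : ℝ) ≠ 0 := by positivity
    push_cast
    have h3 : (n : ℝ) - (↑m + 1) + 1 = (n : ℝ) - m := by ring
    rw [h3]
    field_simp

lemma kmCensoring_pos (n : ℕ) (δ : ℕ → ℕ) (m : ℕ) (h : m < n) :
    0 < kmCensoring n δ m := by
  rw [kmCensoring]
  apply Finset.prod_pos
  intro i hi
  have hi' : i ≤ m := (Finset.mem_Icc.mp hi).2
  have : (i : ℝ) < n := by exact_mod_cast lt_of_le_of_lt hi' h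
  apply pow_pos
  apply div_pos <;> linarith

/-- For every observed event (`δ_k = 1`), the Kaplan–Meier event weight equals `1/n` times the
inverse of the Kaplan–Meier estimate of the probability of being uncensored just before `z_k`. -/
theorem kmWeight_eq_inv_censoring (n k : ℕ) (δ : ℕ → ℕ)
    (hδ : ∀ i, δ i ≤ 1) (hk1 : 1 ≤ k) (hkn : k ≤ n) (hδk : δ k = 1) :
    kmWeight n δ k = (1 / (n : ℝ)) * (1 / kmCensoring n δ (k - 1)) := by
  obtain ⟨m, rfl⟩ : ∃ m, k = m + 1 := ⟨k - 1, by omega⟩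
  have hmn : m < n := hkn
  have hn : 0 < n := lt_of_le_of_lt (Nat.zero_le m) hmn
  have hm : (m : ℝ) < n := by exact_mod_cast hmn
  have h1 : (n : ℝ) - m ≠ 0 := by linarith
  have h2 : (n : ℝ) ≠ 0 := by positivity
  have hc := kmCensoring_pos n δ m hmn
  have hac : kmSurvival n δ m * kmCensoring n δ m = ((n : ℝ) - m) / n := by
    rw [km_prod_mul n δ hδ m, km_telescope n hn m (le_of_lt hmn)]
  have hs : kmSurvival n δ (m + 1)
      = kmSurvival n δ m * (((n : ℝ) - (m + 1)) / ((n : ℝ) - (m + 1) + 1)) := by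
    rw [kmSurvival, kmSurvival, Finset.prod_Icc_succ_top (Nat.le_add_left 1 m), hδk, pow_one]
    push_cast
    ring
  rw [kmWeight]
  simp only [Nat.add_sub_cancel]
  rw [hs]
  have ha : kmSurvival n δ m = (((n : ℝ) - m) / n) / kmCensoring n δ m := by
    field_simp at hac ⊢
    linarith [hac]
  rw [ha]
  push_cast
  have hc' : kmCensoring n δ m ≠ 0 := ne_of_gt hc
  have h3 : (n : ℝ) - (↑m + 1) + 1 = (n : ℝ) - m := by ring
  rw [h3]
  field_simp
  ring
end

section
/- Let k : X × X → ℝ and l : Y × Y → ℝ be kernels of RKHSs H_X and H_Y, and let K((x,y),(x',y')) = k(x,x')·l(y,y') be the product kernel on X × Y with RKHS H. Given data points (x_1,y_1),...,(x_n,y_n) and a weight vector w ∈ ℝ^n, define wHSIC = ‖ Σ_{i=1}^n w_i K((x_i,y_i),·) − Σ_{i=1}^n Σ_{j=1}^n w_i w_j K((x_i,y_j),·) ‖²_H. Then wHSIC = tr(H_w K H_w L), where K_{ij} = k(x_i,x_j), L_{ij} = l(y_i,y_j), H_w = D_w − w wᵀ, and D_w = diag(w). -/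
open Matrix
open scoped RealInnerProductSpace

/-- Computation of wHSIC: for kernels `k`, `l` with product kernel represented by a feature map
`φ` into the RKHS `H` (so that `⟪φ(x,y), φ(x',y')⟫ = k(x,x')·l(y,y')`), the weighted HSIC
statistic equals `tr(H_w K H_w L)` where `H_w = diag(w) − wwᵀ`. -/
theorem whsic_trace_formula {𝒳 𝒴 H : Type*}
    [NormedAddCommGroup H] [InnerProductSpace ℝ H]
    (k : 𝒳 → 𝒳 → ℝ) (l : 𝒴 → 𝒴 → ℝ)
    (hk : ∀ a b, k a b = k b a) (hl : ∀ a b, l a b = l b a)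
    (φ : 𝒳 × 𝒴 → H)
    (hφ : ∀ p q : 𝒳 × 𝒴, ⟪φ p, φ q⟫ = k p.1 q.1 * l p.2 q.2)
    {n : ℕ} (x : Fin n → 𝒳) (y : Fin n → 𝒴) (w : Fin n → ℝ) :
    let K : Matrix (Fin n) (Fin n) ℝ := Matrix.of fun i j => k (x i) (x j)
    let L : Matrix (Fin n) (Fin n) ℝ := Matrix.of fun i j => l (y i) (y j)
    let Hw : Matrix (Fin n) (Fin n) ℝ := Matrix.diagonal w - Matrix.vecMulVec w w
    ‖(∑ i, w i • φ (x i, y i)) - ∑ i, ∑ j, (w i * w j) • φ (x i, y j)‖ ^ 2 =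
      (Hw * K * Hw * L).trace := by
  intro K L Hw
  have hsym : ∀ i j, Hw i j = Hw j i := by
    intro i j
    simp only [Hw, Matrix.sub_apply, Matrix.vecMulVec_apply]
    rw [Matrix.diagonal_apply, Matrix.diagonal_apply]
    by_cases h : i = j
    · simp [h, mul_comm]
    · simp [h, Ne.symm h, mul_comm]
  have hrepr : (∑ i, w i • φ (x i, y i)) - ∑ i, ∑ j, (w i * w j) • φ (x i, y j)
      = ∑ i, ∑ j, Hw i j • φ (x i, y j) := by
    rw [← Finset.sum_sub_distrib]
    refine Finset.sum_congr rfl fun i _ => ?_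
    have : w i • φ (x i, y i)
        = ∑ j, Matrix.diagonal w i j • φ (x i, y j) := by
      rw [Finset.sum_eq_single i]
      · simp
      · intro j _ hj
        simp [Matrix.diagonal_apply, Ne.symm hj]
      · simp
    rw [this, ← Finset.sum_sub_distrib]
    refine Finset.sum_congr rfl fun j _ => ?_
    simp [Hw, Matrix.sub_apply, Matrix.vecMulVec_apply, sub_smul]
  rw [hrepr, ← real_inner_self_eq_norm_sq]
  simp only [sum_inner, inner_sum, real_inner_smul_left, real_inner_smul_right, hφ]
  simp only [Matrix.trace, Matrix.diag_apply, Matrix.mul_apply, Finset.sum_mul,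
    Finset.mul_sum]
  -- LHS : Σ_i Σ_j Σ_p Σ_q Hw i j * (Hw p q * (k (x i) (x p) * l (y j) (y q)))
  -- RHS : Σ_a Σ_d Σ_c Σ_b ... need to align
  have comm4 : ∀ (f : Fin n → Fin n → Fin n → Fin n → ℝ),
      (∑ a, ∑ b, ∑ c, ∑ d, f a b c d) = ∑ b, ∑ d, ∑ c, ∑ a, f a b c d := by
    intro f
    rw [Finset.sum_comm]
    refine Finset.sum_congr rfl fun b _ => ?_
    rw [Finset.sum_comm]
    rw [show (∑ c, ∑ a, ∑ d, f a b c d) = ∑ c, ∑ d, ∑ a, f a b c d from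
      Finset.sum_congr rfl fun c _ => Finset.sum_comm]
    exact Finset.sum_comm
  rw [comm4 (fun a b c d => Hw a b * (Hw c d * (k (x c) (x a) * l (y d) (y b))))]
  refine Finset.sum_congr rfl fun b _ => Finset.sum_congr rfl fun d _ =>
    Finset.sum_congr rfl fun c _ => Finset.sum_congr rfl fun a _ => ?_
  simp only [K, L, Matrix.of_apply]
  rw [hsym b a, hk (x a) (x c)]
  ring
end

section
/- Let (X,Y) be random variables with laws P_X, P_Y and joint law P_{XY}, and (X',Y') an independent copy of (X,Y), and Y'' an independent copy of Y. Assume k and l are bounded measurable kernels on X and Y. Then ‖μ_{P_{XY}} − μ_{P_X P_Y}‖²_H = E[k(X,X') l(Y,Y')] + E[k(X,X')]·E[l(Y,Y')] − 2 E[k(X,X') l(Y,Y'')], where H is the RKHS with product kernel K((x,y),(x',y')) = k(x,x') l(y,y'), μ_P denotes the mean embedding of P in H, and on the right-hand side (X,Y) ⟂ (X',Y') ⟂ Y''. -/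
open MeasureTheory
open scoped RealInnerProductSpace

/-!
With `A = ∫ φ (X ω, Y ω)` and `B = ∫∫ φ (X ω, Y ω')`, expand
`‖A - B‖² = ⟪A, A⟫ + ⟪B, B⟫ - 2⟪A, B⟫` and move the inner products inside the Bochner
integrals. The feature map turns each inner product into `k * l`; in `⟪B, B⟫` the two factors
depend on disjoint sets of integration variables, so the iterated integral splits into the
product of the two marginal terms.
-/

section InnerIntegral

variable {α β H : Type*} [MeasurableSpace α] [MeasurableSpace β]
  [NormedAddCommGroup H] [InnerProductSpace ℝ H] [CompleteSpace H]
  {μ : Measure α} {ν : Measure β}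

theorem inner_integral_left {f : α → H} (hf : Integrable f μ) (c : H) :
    ⟪∫ a, f a ∂μ, c⟫ = ∫ a, ⟪f a, c⟫ ∂μ := by
  rw [real_inner_comm, ← integral_inner hf]
  exact integral_congr_ae (.of_forall fun a => real_inner_comm _ _)

theorem inner_integral_integral {f : α → H} {g : β → H} (hf : Integrable f μ)
    (hg : Integrable g ν) :
    ⟪∫ a, f a ∂μ, ∫ b, g b ∂ν⟫ = ∫ a, ∫ b, ⟪f a, g b⟫ ∂ν ∂μ := by
  simp only [inner_integral_left hf, integral_inner hg]

end InnerIntegral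

theorem hsic_population_expansion_general {Ω 𝒳 𝒴 H : Type*}
    [MeasurableSpace Ω]
    [NormedAddCommGroup H] [InnerProductSpace ℝ H] [CompleteSpace H]
    (μ : Measure Ω)
    (X : Ω → 𝒳) (Y : Ω → 𝒴)
    (k : 𝒳 → 𝒳 → ℝ) (l : 𝒴 → 𝒴 → ℝ)
    (φ : 𝒳 × 𝒴 → H)
    (hφ : ∀ p q : 𝒳 × 𝒴, ⟪φ p, φ q⟫ = k p.1 q.1 * l p.2 q.2)
    (hint : Integrable (fun ω => φ (X ω, Y ω)) μ)
    (hint2 : Integrable (fun ω => ∫ ω', φ (X ω, Y ω') ∂μ) μ)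
    (hint3 : ∀ ω, Integrable (fun ω' => φ (X ω, Y ω')) μ) :
    ‖(∫ ω, φ (X ω, Y ω) ∂μ) - ∫ ω, ∫ ω', φ (X ω, Y ω') ∂μ ∂μ‖ ^ 2 =
      (∫ ω, ∫ ω', k (X ω) (X ω') * l (Y ω) (Y ω') ∂μ ∂μ)
        + (∫ ω, ∫ ω', k (X ω) (X ω') ∂μ ∂μ) * (∫ ω, ∫ ω', l (Y ω) (Y ω') ∂μ ∂μ)
        - 2 * ∫ ω, ∫ ω', ∫ ω'', k (X ω) (X ω') * l (Y ω) (Y ω'') ∂μ ∂μ ∂μ := by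
  have inner_partial_mean (ω : Ω) (c : H) :
      ⟪c, ∫ ω', φ (X ω, Y ω') ∂μ⟫ = ∫ ω', ⟪c, φ (X ω, Y ω')⟫ ∂μ :=
    (integral_inner (hint3 ω) c).symm
  have joint_joint : ⟪∫ ω, φ (X ω, Y ω) ∂μ, ∫ ω, φ (X ω, Y ω) ∂μ⟫ =
      ∫ ω, ∫ ω', k (X ω) (X ω') * l (Y ω) (Y ω') ∂μ ∂μ := by
    simp only [inner_integral_integral hint hint, hφ]
  have joint_product : ⟪∫ ω, φ (X ω, Y ω) ∂μ, ∫ ω, ∫ ω', φ (X ω, Y ω') ∂μ ∂μ⟫ =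
      ∫ ω, ∫ ω', ∫ ω'', k (X ω) (X ω') * l (Y ω) (Y ω'') ∂μ ∂μ ∂μ := by
    simp only [inner_integral_integral hint hint2, inner_partial_mean, hφ]
  have product_product :
      ⟪∫ ω, ∫ ω', φ (X ω, Y ω') ∂μ ∂μ, ∫ ω, ∫ ω', φ (X ω, Y ω') ∂μ ∂μ⟫ =
        (∫ ω, ∫ ω', k (X ω) (X ω') ∂μ ∂μ) * (∫ ω, ∫ ω', l (Y ω) (Y ω') ∂μ ∂μ) := by
    simp only [inner_integral_integral hint2 hint2,
      inner_integral_integral (hint3 _) (hint3 _), hφ, integral_const_mul, integral_mul_const]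
  rw [← real_inner_self_eq_norm_sq, inner_sub_sub_self, joint_joint, joint_product,
    product_product, real_inner_comm, joint_product]
  ring

/-- Population HSIC expansion: with bounded kernels `k`, `l` and the product-kernel RKHS `H`
represented by a feature map `φ` (so `⟪φ(x,y), φ(x',y')⟫ = k(x,x')·l(y,y')`), the squared
distance between the mean embedding of the joint law `μ_{P_{XY}} = ∫ φ(X,Y) dμ` and the mean
embedding of the product of the marginals `μ_{P_X P_Y} = ∫∫ φ(X ω, Y ω') dμ dμ` equals
`E[k(X,X')l(Y,Y')] + E[k(X,X')]·E[l(Y,Y')] − 2E[k(X,X')l(Y,Y'')]`, where the independent copies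
are encoded by iterated integrals over independent coordinates. -/
theorem hsic_population_expansion {Ω 𝒳 𝒴 H : Type*}
    [MeasurableSpace Ω] [MeasurableSpace 𝒳] [MeasurableSpace 𝒴]
    [NormedAddCommGroup H] [InnerProductSpace ℝ H] [CompleteSpace H]
    (μ : Measure Ω) [IsProbabilityMeasure μ]
    (X : Ω → 𝒳) (Y : Ω → 𝒴) (hX : Measurable X) (hY : Measurable Y)
    (k : 𝒳 → 𝒳 → ℝ) (l : 𝒴 → 𝒴 → ℝ)
    (hkB : ∃ Ck : ℝ, ∀ a b, |k a b| ≤ Ck)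
    (hlB : ∃ Cl : ℝ, ∀ a b, |l a b| ≤ Cl)
    (hkm : Measurable (Function.uncurry k)) (hlm : Measurable (Function.uncurry l))
    (φ : 𝒳 × 𝒴 → H)
    (hφ : ∀ p q : 𝒳 × 𝒴, ⟪φ p, φ q⟫ = k p.1 q.1 * l p.2 q.2)
    (hint : Integrable (fun ω => φ (X ω, Y ω)) μ)
    (hint2 : Integrable (fun ω => ∫ ω', φ (X ω, Y ω') ∂μ) μ)
    (hint3 : ∀ ω, Integrable (fun ω' => φ (X ω, Y ω')) μ) :
    ‖(∫ ω, φ (X ω, Y ω) ∂μ) - ∫ ω, ∫ ω', φ (X ω, Y ω') ∂μ ∂μ‖ ^ 2 =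
      (∫ ω, ∫ ω', k (X ω) (X ω') * l (Y ω) (Y ω') ∂μ ∂μ)
        + (∫ ω, ∫ ω', k (X ω) (X ω') ∂μ ∂μ) * (∫ ω, ∫ ω', l (Y ω) (Y ω') ∂μ ∂μ)
        - 2 * ∫ ω, ∫ ω', ∫ ω'', k (X ω) (X ω') * l (Y ω) (Y ω'') ∂μ ∂μ ∂μ :=
  hsic_population_expansion_general μ X Y k l φ hφ hint hint2 hint3
end

section
/- If C ⟂ X, then any dependence of X on Z = min(T,C) implies dependence of X on T: formally, if T ⟂ C | X, C ⟂ X, and X ⟂ T, then X ⟂ Z. -/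
open MeasureTheory ProbabilityTheory

/-! Given `X`, the conditional probabilities of `{T ∈ A}` and `{C ∈ B}` are constant because
`T ⟂ X` and `C ⟂ X`; by `T ⟂ C | X` so is that of `{T ∈ A, C ∈ B}`. Hence `X` is independent of
the pair `(T, C)`, and therefore of `min T C`. -/

section

variable {Ω : Type*} {m' m₁ m₂ mΩ : MeasurableSpace Ω} {μ : Measure Ω} {s t u : Set Ω}

lemma condExp_ae_eq_measureReal_of_indep (hm₁ : m₁ ≤ mΩ) (hm' : m' ≤ mΩ)
    [SigmaFinite (μ.trim hm')] (hind : Indep m₁ m' μ) (hs : MeasurableSet[m₁] s) :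
    μ⟦s | m'⟧ =ᵐ[μ] fun _ ↦ μ.real s := by
  rw [← integral_indicator_one (hm₁ _ hs)]
  exact condExp_indep_eq hm₁ hm' (stronglyMeasurable_one.indicator hs) hind

lemma measureReal_inter_eq_mul_of_condExp_ae_eq_const [IsFiniteMeasure μ] (hm' : m' ≤ mΩ)
    {c : ℝ} (hs : MeasurableSet s) (hc : μ⟦s | m'⟧ =ᵐ[μ] fun _ ↦ c) (hu : MeasurableSet[m'] u) :
    μ.real (u ∩ s) = μ.real u * c := by
  calc μ.real (u ∩ s) = ∫ ω in u, s.indicator 1 ω ∂μ := by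
        rw [integral_indicator_one hs, measureReal_restrict_apply hs, Set.inter_comm]
    _ = ∫ ω in u, (μ⟦s | m'⟧) ω ∂μ :=
        (setIntegral_condExp hm' ((integrable_const 1).indicator hs) hu).symm
    _ = ∫ ω in u, c ∂μ := setIntegral_congr_ae (hm' _ hu) (hc.mono fun _ h _ ↦ h)
    _ = μ.real u * c := by rw [setIntegral_const, smul_eq_mul]

lemma measure_inter_inter_eq_mul_of_condIndep [StandardBorelSpace Ω] [IsProbabilityMeasure μ]
    (hm₁ : m₁ ≤ mΩ) (hm₂ : m₂ ≤ mΩ) (hm' : m' ≤ mΩ) (hcond : CondIndep m' m₁ m₂ hm' μ)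
    (h₁ : Indep m₁ m' μ) (h₂ : Indep m₂ m' μ)
    (hs : MeasurableSet[m₁] s) (ht : MeasurableSet[m₂] t) (hu : MeasurableSet[m'] u) :
    μ (u ∩ (s ∩ t)) = μ u * μ (s ∩ t) := by
  have hst : μ⟦s ∩ t | m'⟧ =ᵐ[μ] fun _ ↦ μ.real s * μ.real t := by
    filter_upwards [(condIndep_iff m' m₁ m₂ hm' hm₁ hm₂ μ).1 hcond s t hs ht,
      condExp_ae_eq_measureReal_of_indep hm₁ hm' h₁ hs,
      condExp_ae_eq_measureReal_of_indep hm₂ hm' h₂ ht] with ω h hs ht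
    rw [h, Pi.mul_apply, hs, ht]
  have hmul {v : Set Ω} (hv : MeasurableSet[m'] v) :=
    measureReal_inter_eq_mul_of_condExp_ae_eq_const hm' ((hm₁ _ hs).inter (hm₂ _ ht)) hst hv
  have hprod : μ.real (s ∩ t) = μ.real s * μ.real t := by
    simpa using hmul MeasurableSet.univ
  rw [← ENNReal.toReal_eq_toReal_iff' (by finiteness) (by finiteness), ENNReal.toReal_mul]
  simp only [← measureReal_def]
  rw [hmul hu, hprod]

end

theorem indepFun_prodMk_of_condIndepFun {Ω β β' γ : Type*} {mΩ : MeasurableSpace Ω}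
    [StandardBorelSpace Ω] {mβ : MeasurableSpace β} {mβ' : MeasurableSpace β'}
    {mγ : MeasurableSpace γ} {μ : Measure Ω} [IsProbabilityMeasure μ]
    {f : Ω → β} {g : Ω → β'} {k : Ω → γ}
    (hf : Measurable f) (hg : Measurable g) (hk : Measurable k)
    (hfg : CondIndepFun (mγ.comap k) hk.comap_le f g μ)
    (hfk : IndepFun f k μ) (hgk : IndepFun g k μ) :
    IndepFun k (fun ω ↦ (f ω, g ω)) μ := by
  rw [indepFun_iff_map_prod_eq_prod_map_map hk.aemeasurable (hf.prodMk hg).aemeasurable]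
  refine Measure.ext_prod₃ fun hu hs ht ↦ ?_
  rw [Measure.map_apply (hk.prodMk (hf.prodMk hg)) (hu.prod (hs.prod ht)), Measure.prod_prod,
    Measure.map_apply hk hu, Measure.map_apply (hf.prodMk hg) (hs.prod ht)]
  exact measure_inter_inter_eq_mul_of_condIndep hf.comap_le hg.comap_le hk.comap_le hfg hfk hgk
    ⟨_, hs, rfl⟩ ⟨_, ht, rfl⟩ ⟨_, hu, rfl⟩

/-- Justification of the zHSIC test: under censoring independent of the covariate (`C ⟂ X`) and
conditionally independent censoring (`T ⟂ C | X`), the null `X ⟂ T` implies `X ⟂ Z` where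
`Z = min(T,C)`. -/
theorem indep_covariate_observed_time {Ω 𝒳 : Type*}
    [MeasurableSpace Ω] [StandardBorelSpace Ω] [MeasurableSpace 𝒳]
    (μ : Measure Ω) [IsProbabilityMeasure μ]
    (X : Ω → 𝒳) (T C : Ω → ℝ)
    (hX : Measurable X) (hT : Measurable T) (hC : Measurable C)
    (hCX : IndepFun C X μ)
    (hTC : CondIndepFun (MeasurableSpace.comap X ‹MeasurableSpace 𝒳›) hX.comap_le T C μ)
    (hXT : IndepFun X T μ) :
    IndepFun X (fun ω => min (T ω) (C ω)) μ :=
  (indepFun_prodMk_of_condIndepFun hT hC hX hTC hXT.symm hCX).comp measurable_id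
    (measurable_fst.min measurable_snd)
end

section
/- The function k(x,x') = |x| + |x'| − |x − x'| on ℝ × ℝ is a positive semidefinite kernel: for all n, all x_1,...,x_n ∈ ℝ and all c_1,...,c_n ∈ ℝ, Σ_{i,j} c_i c_j k(x_i, x_j) ≥ 0. -/
/-!
`|a| + |b| - |a - b|` is twice the length of `uIoc 0 a ∩ uIoc 0 b`, i.e. twice the `L²(ℝ)` inner
product of the indicators of these intervals. The kernel matrix is therefore a Gram matrix, and
the quadratic form `∑ i, ∑ j, c i * c j * k (x i) (x j)` equals
`2 * ‖∑ i, c i • 𝟙 (uIoc 0 (x i))‖ ^ 2 ≥ 0`.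
-/

open MeasureTheory Set
open scoped InnerProductSpace ENNReal

theorem sum_sum_mul_real_inner_nonneg {E ι : Type*} [SeminormedAddCommGroup E]
    [InnerProductSpace ℝ E] [Fintype ι] (v : ι → E) (c : ι → ℝ) :
    0 ≤ ∑ i, ∑ j, c i * c j * ⟪v i, v j⟫_ℝ := by
  have h : ∑ i, ∑ j, c i * c j * ⟪v i, v j⟫_ℝ = ⟪∑ i, c i • v i, ∑ j, c j • v j⟫_ℝ := by
    simp_rw [sum_inner, inner_sum, real_inner_smul_left, real_inner_smul_right, mul_assoc]
  exact h ▸ real_inner_self_nonneg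

theorem sum_sum_mul_measureReal_inter_nonneg {α ι : Type*} [MeasurableSpace α] [Fintype ι]
    (μ : Measure α) (s : ι → Set α) (hs : ∀ i, MeasurableSet (s i)) (hμs : ∀ i, μ (s i) ≠ ∞)
    (c : ι → ℝ) : 0 ≤ ∑ i, ∑ j, c i * c j * μ.real (s i ∩ s j) := by
  simpa only [L2.inner_indicatorConstLp_one_indicatorConstLp_one, RCLike.ofReal_real_eq_id,
    id] using
    sum_sum_mul_real_inner_nonneg (fun i ↦ indicatorConstLp 2 (hs i) (hμs i) (1 : ℝ)) c

theorem abs_add_abs_sub_abs_sub_eq_two_mul_volume_real (a b : ℝ) :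
    |a| + |b| - |a - b| = 2 * volume.real (uIoc 0 a ∩ uIoc 0 b) := by
  rw [uIoc, uIoc, Ioc_inter_Ioc, Real.volume_real_Ioc]
  rcases le_total 0 a with ha | ha <;> rcases le_total 0 b with hb | hb <;>
    rcases le_total a b with hab | hab <;>
    simp [abs_of_nonneg, abs_of_nonpos, ha, hb, hab, sub_nonneg.2, sub_nonpos.2] <;>
    linarith

/-- The distance-induced kernel `k(x,x') = |x| + |x'| − |x − x'|` on `ℝ` is positive
semidefinite. -/
theorem distance_kernel_posSemidef (n : ℕ) (x : Fin n → ℝ) (c : Fin n → ℝ) :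
    0 ≤ ∑ i, ∑ j, c i * c j * (|x i| + |x j| - |x i - x j|) := by
  have h := sum_sum_mul_measureReal_inter_nonneg volume (fun i ↦ uIoc 0 (x i))
    (fun _ ↦ measurableSet_uIoc) (fun _ ↦ by simp [Real.volume_uIoc]) c
  simp_rw [abs_add_abs_sub_abs_sub_eq_two_mul_volume_real, mul_left_comm _ (2 : ℝ),
    ← Finset.mul_sum]
  exact mul_nonneg zero_le_two h
end

section
/- With kernels k(x,x') = l(x,x') = |x| + |x'| − |x−x'| on ℝ, the biased HSIC estimator (1/n²)Σ_{i,j} k(x_i,x_j) l(y_i,y_j) + (1/n⁴)Σ_{i,j} k(x_i,x_j) Σ_{q,r} l(y_q,y_r) − (2/n³)Σ_{i,j,r} k(x_i,x_j) l(y_i,y_r) equals the distance covariance statistic (1/n²)Σ_{i,j} |x_i−x_j||y_i−y_j| + (1/n²)Σ_{i,j}|x_i−x_j| · (1/n²)Σ_{q,r}|y_q−y_r| − (2/n³)Σ_{i,j,r}|x_i−x_j||y_i−y_r|. -/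
/-! The estimator is bilinear and symmetric in its two kernel matrices, and it vanishes on any
matrix of the form `a i + a j` paired with a symmetric matrix `L`: its three terms contribute
`2U/n²`, `2SQ/n³` and `-2(nU + SQ)/n³`, where `U = ∑ a i * L i j`, `S = ∑ a i`, `Q = ∑ L i j`.
Since `|x| + |x'| - |x - x'|` is such a matrix minus the distance matrix, only the distance
matrices survive, and the two minus signs cancel. -/

open Finset

variable {ι 𝕜 : Type*} [Fintype ι] [Field 𝕜]

def hsicBiased (K L : ι → ι → 𝕜) : 𝕜 :=
  1 / (Fintype.card ι : 𝕜) ^ 2 * ∑ i, ∑ j, K i j * L i j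
    + 1 / (Fintype.card ι : 𝕜) ^ 4 * (∑ i, ∑ j, K i j) * (∑ q, ∑ r, L q r)
    - 2 / (Fintype.card ι : 𝕜) ^ 3 * ∑ i, ∑ j, ∑ r, K i j * L i r

theorem hsicBiased_comm (K L : ι → ι → 𝕜) : hsicBiased K L = hsicBiased L K := by
  unfold hsicBiased
  rw [sum_congr rfl fun i _ => sum_comm (f := fun j r => L i j * K i r)]
  simp only [mul_comm (L _ _)]
  ring

theorem hsicBiased_sub_left (K K' L : ι → ι → 𝕜) :
    hsicBiased (fun i j => K i j - K' i j) L = hsicBiased K L - hsicBiased K' L := by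
  simp only [hsicBiased, sub_mul, sum_sub_distrib]
  ring

theorem hsicBiased_add_sum_left_eq_zero (a : ι → 𝕜) {L : ι → ι → 𝕜}
    (hL : ∀ i j, L i j = L j i) : hsicBiased (fun i j => a i + a j) L = 0 := by
  unfold hsicBiased
  set N : 𝕜 := ((Fintype.card ι : ℕ) : 𝕜)
  set U := ∑ i, ∑ j, a i * L i j
  have h_pair : ∑ i, ∑ j, (a i + a j) * L i j = 2 * U := by
    have : ∑ i, ∑ j, a j * L i j = U := by
      rw [sum_comm]; simp only [hL, U]
    simp only [add_mul, sum_add_distrib, this]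
    ring
  have h_total : ∑ i, ∑ j, (a i + a j) = 2 * N * ∑ i, a i := by
    simp only [sum_add_distrib, sum_const, card_univ, nsmul_eq_mul, ← mul_sum, N]
    ring
  have h_triple : ∑ i, ∑ j, ∑ r, (a i + a j) * L i r = N * U + (∑ i, a i) * ∑ i, ∑ r, L i r := by
    simp only [add_mul, sum_add_distrib, sum_const, card_univ, nsmul_eq_mul, ← mul_sum,
      ← sum_mul, N, U]
  rw [h_pair, h_total, h_triple]
  rcases eq_or_ne N 0 with hN | hN
  · simp [hN]
  · field_simp
    ring

theorem hsicBiased_add_add_sub_left {a : ι → 𝕜} {K L : ι → ι → 𝕜} (hL : ∀ i j, L i j = L j i) :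
    hsicBiased (fun i j => a i + a j - K i j) L = -hsicBiased K L := by
  rw [hsicBiased_sub_left (fun i j => a i + a j), hsicBiased_add_sum_left_eq_zero a hL, zero_sub]

theorem hsicBiased_add_add_sub_add_add_sub (a b : ι → 𝕜) {A B : ι → ι → 𝕜}
    (hA : ∀ i j, A i j = A j i) (hB : ∀ i j, B i j = B j i) :
    hsicBiased (fun i j => a i + a j - A i j) (fun i j => b i + b j - B i j) = hsicBiased A B := by
  have hB' : ∀ i j, b i + b j - B i j = b j + b i - B j i := fun i j => by rw [hB, add_comm]
  rw [hsicBiased_add_add_sub_left hB', hsicBiased_comm, hsicBiased_add_add_sub_left hA,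
    hsicBiased_comm, neg_neg]

/-- With the distance-induced kernels `k(x,x') = l(x,x') = |x| + |x'| − |x−x'|` on `ℝ`, the biased
HSIC estimator equals the distance covariance statistic. -/
theorem hsic_eq_dcov (n : ℕ) (x y : Fin n → ℝ) :
    (1 / (n : ℝ) ^ 2) * ∑ i, ∑ j,
        (|x i| + |x j| - |x i - x j|) * (|y i| + |y j| - |y i - y j|)
      + (1 / (n : ℝ) ^ 4) * (∑ i, ∑ j, (|x i| + |x j| - |x i - x j|))
          * (∑ q, ∑ r, (|y q| + |y r| - |y q - y r|))
      - (2 / (n : ℝ) ^ 3) * ∑ i, ∑ j, ∑ r,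
          (|x i| + |x j| - |x i - x j|) * (|y i| + |y r| - |y i - y r|)
    = (1 / (n : ℝ) ^ 2) * ∑ i, ∑ j, |x i - x j| * |y i - y j|
      + ((1 / (n : ℝ) ^ 2) * ∑ i, ∑ j, |x i - x j|)
          * ((1 / (n : ℝ) ^ 2) * ∑ q, ∑ r, |y q - y r|)
      - (2 / (n : ℝ) ^ 3) * ∑ i, ∑ j, ∑ r, |x i - x j| * |y i - y r| := by
  have h := hsicBiased_add_add_sub_add_add_sub (fun i => |x i|) (fun i => |y i|)
    (fun i j => abs_sub_comm (x i) (x j)) (fun i j => abs_sub_comm (y i) (y j))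
  simp only [hsicBiased, Fintype.card_fin] at h
  rw [h]
  ring
end
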